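/- Let (A₁,A₂, l_{≻₁}, r_{≻₁}, l_{≺₁}, r_{≺₁}, l_{≻₂}, r_{≻₂}, l_{≺₂}, r_{≺₂}) be a matched pair of anti-dendriform algebras. Then (A₁, A₂, l_{≻₁}+l_{≺₁}, r_{≻₁}+r_{≺₁}, l_{≻₂}+l_{≺₂}, r_{≻₂}+r_{≺₂}) is a matched pair of the associated associative algebras (A₁,·₁) and (A₂,·₂). -/

import Mathlib

def IsLin (k : Type*) [Field k] {V W : Type*} [AddCommGroup V] [Module k V]
    [AddCommGroup W] [Module k W] (f : V → W) : Prop :=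
  ∀ (c : k) (u v : V), f (c • u + v) = c • f u + f v

def IsBilin (k : Type*) [Field k] {U V W : Type*} [AddCommGroup U] [Module k U]
    [AddCommGroup V] [Module k V] [AddCommGroup W] [Module k W]
    (f : U → V → W) : Prop :=
  (∀ x, IsLin k (f x)) ∧ (∀ y, IsLin k (fun x => f x y))

/-- An anti-dendriform algebra structure given by two bilinear operations `s` (≻) and `p` (≺). -/
def IsADAlg (k : Type*) [Field k] {A : Type*} [AddCommGroup A] [Module k A]
    (s p : A → A → A) : Prop :=
  IsBilin k s ∧ IsBilin k p ∧
  (∀ x y z, s x (s y z) = - s (s x y + p x y) z) ∧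
  (∀ x y z, s x (s y z) = - p x (s y z + p y z)) ∧
  (∀ x y z, s x (s y z) = p (p x y) z) ∧
  (∀ x y z, p (s x y) z = s x (p y z))

/-- A representation of an anti-dendriform algebra `(A, s, p)` on `V`. -/
def IsADRep (k : Type*) [Field k] {A V : Type*} [AddCommGroup A] [Module k A]
    [AddCommGroup V] [Module k V]
    (s p : A → A → A) (ls rs lp rp : A → V → V) : Prop :=
  IsBilin k ls ∧ IsBilin k rs ∧ IsBilin k lp ∧ IsBilin k rp ∧
  (∀ x y v, ls x (ls y v) = - ls (s x y + p x y) v) ∧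
  (∀ x y v, ls x (ls y v) = - lp x (ls y v + lp y v)) ∧
  (∀ x y v, ls x (ls y v) = lp (p x y) v) ∧
  (∀ x y v, rs (s x y) v = - rs y (rs x v + rp x v)) ∧
  (∀ x y v, rs (s x y) v = - rp (s x y + p x y) v) ∧
  (∀ x y v, rs (s x y) v = rp y (rp x v)) ∧
  (∀ x y v, ls x (rs y v) = - rs y (ls x v + lp x v)) ∧
  (∀ x y v, ls x (rs y v) = - lp x (rs y v + rp y v)) ∧
  (∀ x y v, ls x (rs y v) = rp y (lp x v)) ∧
  (∀ x y v, lp (s x y) v = ls x (lp y v)) ∧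
  (∀ x y v, rp y (rs x v) = rs (p x y) v) ∧
  (∀ x y v, rp y (ls x v) = ls x (rp y v))

/-- A representation (bimodule) of an associative algebra `(A, m)` on `V`. -/
def IsAssocRep (k : Type*) [Field k] {A V : Type*} [AddCommGroup A] [Module k A]
    [AddCommGroup V] [Module k V]
    (m : A → A → A) (l r : A → V → V) : Prop :=
  IsBilin k l ∧ IsBilin k r ∧
  (∀ x y v, l (m x y) v = l x (l y v)) ∧
  (∀ x y v, r (m x y) v = r y (r x v)) ∧
  (∀ x y v, r y (l x v) = l x (r y v))

/-- A matched pair of anti-dendriform algebras (conditions (M1)–(M12)). -/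
def IsADMatchedPair (k : Type*) [Field k] {A B : Type*} [AddCommGroup A] [Module k A]
    [AddCommGroup B] [Module k B]
    (s1 p1 : A → A → A) (s2 p2 : B → B → B)
    (ls1 rs1 lp1 rp1 : A → B → B) (ls2 rs2 lp2 rp2 : B → A → A) : Prop :=
  IsADRep k s1 p1 ls1 rs1 lp1 rp1 ∧
  IsADRep k s2 p2 ls2 rs2 lp2 rp2 ∧
  (∀ x y c, s1 x (rs2 c y) + rs2 (ls1 y c) x = - rs2 c (s1 x y + p1 x y)) ∧
  (∀ x y c, s1 x (rs2 c y) + rs2 (ls1 y c) x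
      = - p1 x (rs2 c y + rp2 c y) - rp2 (ls1 y c + lp1 y c) x) ∧
  (∀ x y c, s1 x (rs2 c y) + rs2 (ls1 y c) x = rp2 c (p1 x y)) ∧
  (∀ x z b, s1 x (ls2 b z) + rs2 (rs1 z b) x
      = - s1 (rs2 b x + rp2 b x) z - ls2 (ls1 x b + lp1 x b) z) ∧
  (∀ x z b, s1 x (ls2 b z) + rs2 (rs1 z b) x
      = - p1 x (ls2 b z + lp2 b z) - rp2 (rs1 z b + rp1 z b) x) ∧
  (∀ x z b, s1 x (ls2 b z) + rs2 (rs1 z b) x = p1 (rp2 b x) z + lp2 (lp1 x b) z) ∧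
  (∀ y z a, ls2 a (s1 y z) = - s1 (ls2 a y + lp2 a y) z - ls2 (rs1 y a + rp1 y a) z) ∧
  (∀ y z a, ls2 a (s1 y z) = - lp2 a (s1 y z + p1 y z)) ∧
  (∀ y z a, ls2 a (s1 y z) = p1 (lp2 a y) z + lp2 (rp1 y a) z) ∧
  (∀ x b c, ls1 x (s2 b c) = - s2 (ls1 x b + lp1 x b) c - ls1 (rs2 b x + rp2 b x) c) ∧
  (∀ x b c, ls1 x (s2 b c) = - lp1 x (s2 b c + p2 b c)) ∧
  (∀ x b c, ls1 x (s2 b c) = p2 (lp1 x b) c + lp1 (rp2 b x) c) ∧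
  (∀ y a c, s2 a (ls1 y c) + rs1 (rs2 c y) a
      = - s2 (rs1 y a + rp1 y a) c - ls1 (ls2 a y + lp2 a y) c) ∧
  (∀ y a c, s2 a (ls1 y c) + rs1 (rs2 c y) a
      = - p2 a (ls1 y c + lp1 y c) - rp1 (rs2 c y + rp2 c y) a) ∧
  (∀ y a c, s2 a (ls1 y c) + rs1 (rs2 c y) a = p2 (rp1 y a) c + lp1 (lp2 a y) c) ∧
  (∀ z a b, s2 a (rs1 z b) + rs1 (ls2 b z) a = - rs1 z (s2 a b + p2 a b)) ∧
  (∀ z a b, s2 a (rs1 z b) + rs1 (ls2 b z) a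
      = - p2 a (rs1 z b + rp1 z b) - rp1 (ls2 b z + lp2 b z) a) ∧
  (∀ z a b, s2 a (rs1 z b) + rs1 (ls2 b z) a = rp1 z (p2 a b)) ∧
  (∀ x y c, rp2 c (s1 x y) = s1 x (rp2 c y) + rs2 (lp1 y c) x) ∧
  (∀ x z b, p1 (rs2 b x) z + lp2 (ls1 x b) z = s1 x (lp2 b z) + rs2 (rp1 z b) x) ∧
  (∀ y z a, p1 (ls2 a y) z + lp2 (rs1 y a) z = ls2 a (p1 y z)) ∧
  (∀ x b c, p2 (ls1 x b) c + lp1 (rs2 b x) c = ls1 x (p2 b c)) ∧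
  (∀ y a c, p2 (rs1 y a) c + lp1 (ls2 a y) c = s2 a (lp1 y c) + rs1 (rp2 c y) a) ∧
  (∀ z a b, rp1 z (s2 a b) = s2 a (rp1 z b) + rs1 (lp2 b z) a)

/-- A matched pair of associative algebras. -/
def IsAssocMatchedPair (k : Type*) [Field k] {A B : Type*} [AddCommGroup A] [Module k A]
    [AddCommGroup B] [Module k B]
    (m1 : A → A → A) (m2 : B → B → B)
    (l1 r1 : A → B → B) (l2 r2 : B → A → A) : Prop :=
  (∀ x y z, m1 (m1 x y) z = m1 x (m1 y z)) ∧
  (∀ a b c, m2 (m2 a b) c = m2 a (m2 b c)) ∧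
  IsAssocRep k m1 l1 r1 ∧
  IsAssocRep k m2 l2 r2 ∧
  (∀ x a b, l1 x (m2 a b) = l1 (r2 a x) b + m2 (l1 x a) b) ∧
  (∀ x a b, r1 x (m2 a b) = r1 (l2 b x) a + m2 a (r1 x b)) ∧
  (∀ a x y, l2 a (m1 x y) = l2 (r1 x a) y + m1 (l2 a x) y) ∧
  (∀ a x y, r2 a (m1 x y) = r2 (l1 y a) x + m1 x (r2 a y)) ∧
  (∀ x a b, l1 (l2 a x) b + m2 (r1 x a) b - r1 (r2 b x) a - m2 a (l1 x b) = 0) ∧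
  (∀ x y a, l2 (l1 x a) y + m1 (r2 a x) y - r2 (r1 y a) x - m1 x (l2 a y) = 0)

/-!
Every relation of an anti-dendriform algebra, of its representations and of a matched pair
comes as a triple `X = -α = -β = γ` with a common left side `X`, accompanied by one relation
mixing `≻` and `≺`. Expanding `· = ≻ + ≺`, the corresponding identity for the associative
algebras is the alternating sum of the triple and the mixed relation, so `X` cancels.
Associativity of `·` is the case of the regular representation, and the conditions on `A₂`
acting on products in `A₁` follow from those on `A₁` acting on products in `A₂`, because the
anti-dendriform matched pair axioms are symmetric in the two algebras.
-/

section Bilinear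

variable {k U V W : Type*} [Field k] [AddCommGroup U] [Module k U] [AddCommGroup V] [Module k V]
  [AddCommGroup W] [Module k W]

theorem IsLin.map_add {f : V → W} (h : IsLin k f) (u v : V) : f (u + v) = f u + f v := by
  simpa using h 1 u v

namespace IsBilin

variable {f g : U → V → W}

theorem add_left (h : IsBilin k f) (u u' : U) (v : V) : f (u + u') v = f u v + f u' v :=
  (h.2 v).map_add u u'

theorem add_right (h : IsBilin k f) (u : U) (v v' : V) : f u (v + v') = f u v + f u v' :=
  (h.1 u).map_add v v'

theorem flip (h : IsBilin k f) : IsBilin k (fun v u => f u v) :=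
  ⟨h.2, h.1⟩

theorem add (hf : IsBilin k f) (hg : IsBilin k g) : IsBilin k (fun u v => f u v + g u v) := by
  refine ⟨fun u c v v' => ?_, fun v c u u' => ?_⟩
  · simp only [hf.1 u c v v', hg.1 u c v v']
    module
  · simp only [hf.2 v c u u', hg.2 v c u u']
    module

end IsBilin

end Bilinear

section Representation

variable {k A V : Type*} [Field k] [AddCommGroup A] [Module k A] [AddCommGroup V] [Module k V]
  {s p : A → A → A} {ls rs lp rp : A → V → V}

theorem IsADRep.isAssocRep (h : IsADRep k s p ls rs lp rp) :
    IsAssocRep k (fun x y => s x y + p x y) (fun x v => ls x v + lp x v)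
      (fun x v => rs x v + rp x v) := by
  obtain ⟨hls, hrs, hlp, hrp, l1, l2, l3, r1, r2, r3, m1, m2, m3, l4, r4, m4⟩ := h
  refine ⟨hls.add hlp, hrs.add hrp, fun x y v => ?_, fun x y v => ?_, fun x y v => ?_⟩
  · simp only [hls.add_left, hls.add_right, hlp.add_left, hlp.add_right] at l1 l2 ⊢
    linear_combination (norm := module) l1 x y v - l2 x y v - l3 x y v + l4 x y v
  · simp only [hrs.add_left, hrs.add_right, hrp.add_left, hrp.add_right] at r1 r2 ⊢
    linear_combination (norm := module) -r1 x y v + r2 x y v + r3 x y v - r4 x y v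
  · simp only [hls.add_right, hlp.add_right, hrs.add_right, hrp.add_right] at m1 m2 ⊢
    linear_combination (norm := module) m1 x y v - m2 x y v - m3 x y v + m4 x y v

theorem IsADAlg.isADRep_regular (h : IsADAlg k s p) :
    IsADRep k s p s (fun x y => s y x) p (fun x y => p y x) := by
  obtain ⟨hs, hp, h1, h2, h3, h4⟩ := h
  exact ⟨hs, hs.flip, hp, hp.flip, h1, h2, h3, fun x y z => h1 z x y, fun x y z => h2 z x y,
    fun x y z => h3 z x y, fun x y z => h1 x z y, fun x y z => h2 x z y, fun x y z => h3 x z y,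
    h4, fun x y z => h4 z x y, fun x y z => h4 x z y⟩

theorem IsADAlg.mul_assoc (h : IsADAlg k s p) (x y z : A) :
    s (s x y + p x y) z + p (s x y + p x y) z = s x (s y z + p y z) + p x (s y z + p y z) :=
  h.isADRep_regular.isAssocRep.2.2.1 x y z

end Representation

namespace IsADMatchedPair

variable {k A B : Type*} [Field k] [AddCommGroup A] [Module k A] [AddCommGroup B] [Module k B]
  {s1 p1 : A → A → A} {s2 p2 : B → B → B}
  {ls1 rs1 lp1 rp1 : A → B → B} {ls2 rs2 lp2 rp2 : B → A → A}

theorem symm (h : IsADMatchedPair k s1 p1 s2 p2 ls1 rs1 lp1 rp1 ls2 rs2 lp2 rp2) :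
    IsADMatchedPair k s2 p2 s1 p1 ls2 rs2 lp2 rp2 ls1 rs1 lp1 rp1 := by
  obtain ⟨h1, h2, c1, c2, c3, c4, c5, c6, c7, c8, c9, c10, c11, c12, c13, c14, c15, c16, c17, c18,
    c19, c20, c21, c22, c23, c24⟩ := h
  exact ⟨h2, h1, fun x y c => c16 c x y, fun x y c => c17 c x y, fun x y c => c18 c x y,
    fun x z b => c13 b x z, fun x z b => c14 b x z, fun x z b => c15 b x z,
    fun y z a => c10 a y z, fun y z a => c11 a y z, fun y z a => c12 a y z,
    fun x b c => c7 b c x, fun x b c => c8 b c x, fun x b c => c9 b c x,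
    fun y a c => c4 a c y, fun y a c => c5 a c y, fun y a c => c6 a c y,
    fun z a b => c1 a b z, fun z a b => c2 a b z, fun z a b => c3 a b z,
    fun x y c => c24 c x y, fun x z b => c23 b x z, fun y z a => c22 a y z,
    fun x b c => c21 b c x, fun y a c => c20 a c y, fun z a b => c19 a b z⟩

variable (hs2 : IsBilin k s2) (hp2 : IsBilin k p2)
  (h : IsADMatchedPair k s1 p1 s2 p2 ls1 rs1 lp1 rp1 ls2 rs2 lp2 rp2)
include hs2 hp2 h

theorem left_act_mul (x : A) (a b : B) :
    ls1 x (s2 a b + p2 a b) + lp1 x (s2 a b + p2 a b) =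
      ls1 (rs2 a x + rp2 a x) b + lp1 (rs2 a x + rp2 a x) b +
        (s2 (ls1 x a + lp1 x a) b + p2 (ls1 x a + lp1 x a) b) := by
  obtain ⟨⟨hls1, -, hlp1, -⟩, -, -, -, -, -, -, -, -, -, -, e1, e2, e3,
    -, -, -, -, -, -, -, -, -, e4, -, -⟩ := h
  simp only [hls1.add_left, hls1.add_right, hlp1.add_left, hlp1.add_right, hs2.add_left,
    hp2.add_left] at e1 e2 ⊢
  linear_combination (norm := module) -e1 x a b + e2 x a b + e3 x a b - e4 x a b

theorem right_act_mul (x : A) (a b : B) :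
    rs1 x (s2 a b + p2 a b) + rp1 x (s2 a b + p2 a b) =
      rs1 (ls2 b x + lp2 b x) a + rp1 (ls2 b x + lp2 b x) a +
        (s2 a (rs1 x b + rp1 x b) + p2 a (rs1 x b + rp1 x b)) := by
  obtain ⟨⟨-, hrs1, -, hrp1, -⟩, -, -, -, -, -, -, -, -, -, -, -, -, -, -, -, -, e1, e2, e3,
    -, -, -, -, -, e4⟩ := h
  simp only [hrs1.add_left, hrs1.add_right, hrp1.add_left, hrp1.add_right, hs2.add_right,
    hp2.add_right] at e1 e2 ⊢
  linear_combination (norm := module) e1 x a b - e2 x a b - e3 x a b + e4 x a b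

theorem left_right_act_comm (x : A) (a b : B) :
    ls1 (ls2 a x + lp2 a x) b + lp1 (ls2 a x + lp2 a x) b +
        (s2 (rs1 x a + rp1 x a) b + p2 (rs1 x a + rp1 x a) b) -
      (rs1 (rs2 b x + rp2 b x) a + rp1 (rs2 b x + rp2 b x) a) -
        (s2 a (ls1 x b + lp1 x b) + p2 a (ls1 x b + lp1 x b)) = 0 := by
  obtain ⟨⟨hls1, hrs1, hlp1, hrp1, -⟩, -, -, -, -, -, -, -, -, -, -, -, -, -, e1, e2, e3,
    -, -, -, -, -, -, -, e4, -⟩ := h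
  simp only [hls1.add_left, hrs1.add_left, hlp1.add_left, hrp1.add_left, hs2.add_left,
    hs2.add_right, hp2.add_left, hp2.add_right] at e1 e2 ⊢
  linear_combination (norm := module) e1 x a b - e2 x a b - e3 x a b + e4 x a b

end IsADMatchedPair

theorem stmt19 {k A B : Type*} [Field k] [AddCommGroup A] [Module k A]
    [AddCommGroup B] [Module k B]
    (s1 p1 : A → A → A) (s2 p2 : B → B → B)
    (ls1 rs1 lp1 rp1 : A → B → B) (ls2 rs2 lp2 rp2 : B → A → A)
    (h1 : IsADAlg k s1 p1) (h2 : IsADAlg k s2 p2)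
    (hmp : IsADMatchedPair k s1 p1 s2 p2 ls1 rs1 lp1 rp1 ls2 rs2 lp2 rp2) :
    IsAssocMatchedPair k
      (fun x y => s1 x y + p1 x y) (fun a b => s2 a b + p2 a b)
      (fun x b => ls1 x b + lp1 x b) (fun x b => rs1 x b + rp1 x b)
      (fun a x => ls2 a x + lp2 a x) (fun a x => rs2 a x + rp2 a x) := by
  have hs1 : IsBilin k s1 := h1.1
  have hp1 : IsBilin k p1 := h1.2.1
  have hs2 : IsBilin k s2 := h2.1
  have hp2 : IsBilin k p2 := h2.2.1
  exact ⟨h1.mul_assoc, h2.mul_assoc, hmp.1.isAssocRep, hmp.2.1.isAssocRep,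
    hmp.left_act_mul hs2 hp2, hmp.right_act_mul hs2 hp2,
    hmp.symm.left_act_mul hs1 hp1, hmp.symm.right_act_mul hs1 hp1,
    hmp.left_right_act_comm hs2 hp2,
    fun x y a => hmp.symm.left_right_act_comm hs1 hp1 a x y⟩
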